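/- There is no normal subgroup N of H with N nontrivial and N ∩ H_p ⊆ A_p for all positive integers p. -/

import Mathlib

noncomputable section

/-- Ambient group: orientation-preserving bijections (order-isomorphisms) of ℝ. -/
abbrev G₀ : Type := ℝ ≃o ℝ

/-- Dyadic rational real numbers, i.e. elements of ℤ[1/2]. -/
def DyadicR (x : ℝ) : Prop := ∃ (a : ℤ) (n : ℕ), x = (a : ℝ) / 2 ^ n

/-- `f` is piecewise linear: there is a set of breakpoints, all dyadic, with finitely many in
each compact set, off which `f` is locally affine with slope a power of `2`. -/
def IsPL (f : ℝ → ℝ) : Prop :=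
  ∃ B : Set ℝ,
    (∀ x ∈ B, DyadicR x) ∧
    (∀ K : Set ℝ, IsCompact K → (B ∩ K).Finite) ∧
    (∀ x ∉ B, ∃ (n : ℤ) (c : ℝ), ∀ᶠ y in nhds x, f y = (2 : ℝ) ^ n * y + c)

/-- The group `P₊` of orientation-preserving PL homeomorphisms of ℝ with dyadic breakpoints
and slopes powers of 2. -/
def Pplus : Set G₀ := {f : G₀ | IsPL ⇑f}

/-- `H_p`: the `p`-periodically affine elements of `P₊`. -/
def Hset (p : ℕ) : Set G₀ :=
  {f : G₀ | f ∈ Pplus ∧ ∀ t : ℝ, f (t + (p : ℝ)) = f t + (p : ℝ)}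

/-- `A_p`: translations by integer multiples of `p`. -/
def Aset (p : ℕ) : Set G₀ := {f : G₀ | ∃ k : ℤ, ∀ t : ℝ, f t = t + (k : ℝ) * (p : ℝ)}

/-- `H = ⋃_{p ≥ 1} H_p`. -/
def Hunion : Set G₀ := ⋃ p ∈ {p : ℕ | 0 < p}, Hset p

/-! A nontrivial element of `N` lies in some `H_p`, hence in `A_p`: it is a translation
`t ↦ t + c` with `c ≠ 0`. A translation commutes with every shift, so it lies in `H_q` for
every `q`; taking `q > |c|`, it would have to be a translation by a nonzero multiple of `q`,
which is too long. -/

lemma mem_Hset_of_apply_eq_add {f : G₀} (hf : f ∈ Pplus) {c : ℝ} (hc : ∀ t, f t = t + c)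
    (q : ℕ) : f ∈ Hset q :=
  ⟨hf, fun t => by rw [hc, hc]; ring⟩

lemma eq_zero_of_apply_eq_add_of_mem_Aset {f : G₀} {c : ℝ} (hc : ∀ t, f t = t + c) {q : ℕ}
    (hf : f ∈ Aset q) (hcq : |c| < q) : c = 0 := by
  obtain ⟨j, hj⟩ := hf
  have hcj : c = j * q := by simpa [hc 0] using hj 0
  rcases eq_or_ne j 0 with rfl | hj0
  · simpa using hcj
  · have hj1 : (1 : ℝ) ≤ |(j : ℝ)| := by exact_mod_cast Int.one_le_abs hj0
    rw [hcj, abs_mul, Nat.abs_cast] at hcq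
    nlinarith [Nat.cast_nonneg (α := ℝ) q]

theorem stmt13_general (S : Subgroup G₀) (hS : (S : Set G₀) = Hunion)
    (N : Subgroup G₀) (hNS : N ≤ S)
    (hA : ∀ p : ℕ, 0 < p → (N : Set G₀) ∩ Hset p ⊆ Aset p) :
    N = ⊥ := by
  refine (Subgroup.eq_bot_iff_forall N).2 fun n hn => ?_
  obtain ⟨p, hp, hnp⟩ : ∃ p : ℕ, 0 < p ∧ n ∈ Hset p := by
    have hnH : n ∈ Hunion := hS ▸ hNS hn
    simpa [Hunion] using hnH
  obtain ⟨k, hk⟩ := hA p hp ⟨hn, hnp⟩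
  obtain ⟨q, hq⟩ := exists_nat_gt |(k : ℝ) * p|
  have hq0 : 0 < q := by exact_mod_cast (abs_nonneg _).trans_lt hq
  have hnq : n ∈ Aset q := hA q hq0 ⟨hn, mem_Hset_of_apply_eq_add hnp.1 hk q⟩
  have hc : (k : ℝ) * p = 0 := eq_zero_of_apply_eq_add_of_mem_Aset hk hnq hq
  exact DFunLike.ext _ _ fun t => by simp [hk t, hc]

/-- there is no nontrivial normal subgroup `N` of `H` with `N ∩ H_p ⊆ A_p` for
all `p ≥ 1`. -/
theorem stmt13 (S : Subgroup G₀) (hS : (S : Set G₀) = Hunion)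
    (N : Subgroup G₀) (hNS : N ≤ S)
    (hnorm : ∀ g ∈ S, ∀ n ∈ N, g * n * g⁻¹ ∈ N)
    (hA : ∀ p : ℕ, 0 < p → (N : Set G₀) ∩ Hset p ⊆ Aset p) :
    N = ⊥ :=
  stmt13_general S hS N hNS hA
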